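/- Let μ be a real number with 0 < μ < 2 and μ ≠ 1, let l and x be real numbers. Then the function y ↦ (2 e^{ilx} − e^{il(x+y)} − e^{il(x−y)}) / y^{1+μ} is integrable on (0, ∞) and (μ / (2 Γ(1−μ) cos(π μ / 2))) ∫_0^∞ (2 e^{ilx} − e^{il(x+y)} − e^{il(x−y)}) / y^{1+μ} dy = |l|^μ e^{ilx}. In particular, the symmetric (Grünwald–Letnikov–Riesz) fractional derivative of order μ maps the periodic function x ↦ e^{ilx} to |l|^μ e^{ilx}, a periodic function with the same period. -/

import Mathlib

open MeasureTheory

open Real Set Filter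

section GLRieszAux

lemma kernel_meas (μ c : ℝ) :
    AEStronglyMeasurable (fun y : ℝ => (1 - Real.cos (c * y)) / y ^ (1 + μ))
      (volume.restrict (Ioi 0)) := by
  apply Measurable.aestronglyMeasurable
  fun_prop

lemma integrable_kernel {μ : ℝ} (hμ0 : 0 < μ) (hμ2 : μ < 2) (c : ℝ) :
    IntegrableOn (fun y : ℝ => (1 - Real.cos (c * y)) / y ^ (1 + μ)) (Ioi 0) := by
  have hmeas := kernel_meas μ c
  have h1 : IntegrableOn (fun y : ℝ => (1 - Real.cos (c * y)) / y ^ (1 + μ)) (Ioc 0 1) := by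
    have hig : IntegrableOn (fun y : ℝ => c ^ 2 / 2 * y ^ (1 - μ)) (Ioc 0 1) := by
      apply Integrable.const_mul
      rw [← IntegrableOn, ← intervalIntegrable_iff_integrableOn_Ioc_of_le zero_le_one]
      exact intervalIntegral.intervalIntegrable_rpow' (by linarith)
    refine Integrable.mono' hig (hmeas.mono_set Ioc_subset_Ioi_self) ?_
    filter_upwards [ae_restrict_mem measurableSet_Ioc] with y hy
    obtain ⟨hy0, hy1⟩ := hy
    have hyp : (0:ℝ) < y ^ (1 + μ) := rpow_pos_of_pos hy0 _
    have hcos : 1 - Real.cos (c * y) ≤ (c * y) ^ 2 / 2 := by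
      have := Real.one_sub_sq_div_two_le_cos (x := c * y)
      linarith
    have hnn : 0 ≤ 1 - Real.cos (c * y) := by
      have := Real.cos_le_one (c * y); linarith
    rw [Real.norm_of_nonneg (by positivity)]
    rw [div_le_iff₀ hyp]
    calc 1 - Real.cos (c * y) ≤ (c * y) ^ 2 / 2 := hcos
      _ = c ^ 2 / 2 * y ^ (2:ℝ) := by
          rw [Real.rpow_two]; ring
      _ = c ^ 2 / 2 * (y ^ (1 - μ) * y ^ (1 + μ)) := by
          rw [← Real.rpow_add hy0]; norm_num
      _ = c ^ 2 / 2 * y ^ (1 - μ) * y ^ (1 + μ) := by ring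
  have h2 : IntegrableOn (fun y : ℝ => (1 - Real.cos (c * y)) / y ^ (1 + μ)) (Ioi 1) := by
    have hig : IntegrableOn (fun y : ℝ => 2 * y ^ (-(1 + μ))) (Ioi 1) :=
      (integrableOn_Ioi_rpow_of_lt (by linarith) one_pos).const_mul 2
    refine Integrable.mono' hig (hmeas.mono_set (Ioi_subset_Ioi zero_le_one)) ?_
    filter_upwards [ae_restrict_mem measurableSet_Ioi] with y hy
    have hy0 : (0:ℝ) < y := lt_trans one_pos hy
    have hyp : (0:ℝ) < y ^ (1 + μ) := rpow_pos_of_pos hy0 _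
    have hnn : 0 ≤ 1 - Real.cos (c * y) := by
      have := Real.cos_le_one (c * y); linarith
    rw [Real.norm_of_nonneg (by positivity), Real.rpow_neg hy0.le,
      div_le_iff₀ hyp, mul_assoc, inv_mul_cancel₀ hyp.ne', mul_one]
    have := Real.neg_one_le_cos (c * y)
    linarith
  have : Ioi (0:ℝ) = Ioc 0 1 ∪ Ioi 1 := (Ioc_union_Ioi_eq_Ioi zero_le_one).symm
  rw [this]
  exact h1.union h2

lemma laplace_one {t : ℝ} (ht : 0 < t) :
    ∫ y in Ioi (0:ℝ), Real.exp (-(t * y)) = 1 / t := by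
  have := integral_rpow_mul_exp_neg_mul_Ioi (a := 1) one_pos ht
  simpa using this

lemma integrable_exp_cos {t : ℝ} (ht : 0 < t) :
    IntegrableOn (fun y : ℝ => Real.exp (-(t * y)) * Real.cos y) (Ioi 0) := by
  refine Integrable.mono' (exp_neg_integrableOn_Ioi 0 ht) ?_ ?_
  · apply Measurable.aestronglyMeasurable; fun_prop
  · filter_upwards with y
    rw [Real.norm_eq_abs, abs_mul, Real.abs_exp, neg_mul, mul_comm t y]
    calc Real.exp (-(y * t)) * |Real.cos y| ≤ Real.exp (-(y * t)) * 1 := by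
          gcongr; exact Real.abs_cos_le_one y
      _ = Real.exp (-(y * t)) := mul_one _
lemma laplace_cos {t : ℝ} (ht : 0 < t) :
    ∫ y in Ioi (0:ℝ), Real.exp (-(t * y)) * Real.cos y = t / (1 + t ^ 2) := by
  have h12 : (0:ℝ) < 1 + t ^ 2 := by positivity
  set F : ℝ → ℝ := fun y => Real.exp (-(t * y)) * (Real.sin y - t * Real.cos y) / (1 + t ^ 2)
    with hF
  have hderiv : ∀ y ∈ Ioi (0:ℝ), HasDerivAt F (Real.exp (-(t * y)) * Real.cos y) y := by
    intro y _
    have h1 : HasDerivAt (fun y => Real.exp (-(t * y))) (-t * Real.exp (-(t * y))) y := by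
      have := (Real.hasDerivAt_exp (-(t * y))).comp y
        (((hasDerivAt_id y).const_mul t).neg)
      exact this.congr_deriv (by ring)
    have h2 : HasDerivAt (fun y => Real.sin y - t * Real.cos y)
        (Real.cos y + t * Real.sin y) y := by
      exact ((Real.hasDerivAt_sin y).sub ((Real.hasDerivAt_cos y).const_mul t)).congr_deriv (by ring)
    have := (h1.mul h2).div_const (1 + t ^ 2)
    exact this.congr_deriv (by field_simp; ring)
  have htend : Tendsto F atTop (nhds 0) := by
    have hb : Tendsto (fun y : ℝ => Real.exp (-(t * y))) atTop (nhds 0) := by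
      have h1 : Tendsto (fun y : ℝ => t * y) atTop atTop :=
        Filter.Tendsto.const_mul_atTop ht tendsto_id
      have := Real.tendsto_exp_neg_atTop_nhds_zero.comp h1
      simpa [Function.comp_def] using this
    have : Tendsto (fun y => Real.exp (-(t * y)) * ((1 + t) / (1 + t ^ 2))) atTop (nhds 0) := by
      simpa using hb.mul_const ((1 + t) / (1 + t ^ 2))
    apply squeeze_zero_norm _ this
    intro y
    rw [hF]
    simp only [Real.norm_eq_abs, abs_div, abs_mul, Real.abs_exp, abs_of_pos h12,
      mul_div_assoc]
    gcongr
    calc |Real.sin y - t * Real.cos y| ≤ |Real.sin y| + |t * Real.cos y| := abs_sub _ _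
      _ ≤ 1 + t := by
        rw [abs_mul, abs_of_pos ht]
        gcongr
        exacts [Real.abs_sin_le_one y, (mul_le_iff_le_one_right ht).mpr (Real.abs_cos_le_one y)]
  have hint := integrable_exp_cos ht
  have := integral_Ioi_of_hasDerivAt_of_tendsto (f := F)
    (f' := fun y => Real.exp (-(t * y)) * Real.cos y) ?_ hderiv hint htend
  · rw [this, hF]
    simp
    field_simp
  · apply Continuous.continuousWithinAt
    fun_prop

lemma integrable_exp_neg_mul {t : ℝ} (ht : 0 < t) :
    IntegrableOn (fun y : ℝ => Real.exp (-(t * y))) (Ioi 0) := by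
  simpa [neg_mul] using exp_neg_integrableOn_Ioi 0 ht

lemma integrable_one_sub_cos_exp {t : ℝ} (ht : 0 < t) :
    IntegrableOn (fun y : ℝ => (1 - Real.cos y) * Real.exp (-(t * y))) (Ioi 0) := by
  refine Integrable.mono' ((integrable_exp_neg_mul ht).const_mul 2) ?_ ?_
  · apply Measurable.aestronglyMeasurable; fun_prop
  · filter_upwards with y
    rw [Real.norm_eq_abs, abs_mul, Real.abs_exp]
    have h1 := Real.cos_le_one y
    have h2 := Real.neg_one_le_cos y
    have : |1 - Real.cos y| ≤ 2 := by rw [abs_le]; constructor <;> linarith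
    gcongr


lemma laplace_one_sub_cos {t : ℝ} (ht : 0 < t) :
    ∫ y in Ioi (0:ℝ), (1 - Real.cos y) * Real.exp (-(t * y)) = 1 / (t * (1 + t ^ 2)) := by
  have h12 : (0:ℝ) < 1 + t ^ 2 := by positivity
  have : (fun y : ℝ => (1 - Real.cos y) * Real.exp (-(t * y)))
      = fun y => Real.exp (-(t * y)) - Real.exp (-(t * y)) * Real.cos y := by
    funext y; ring
  rw [this, integral_sub (integrable_exp_neg_mul ht) (integrable_exp_cos ht),
    laplace_one ht, laplace_cos ht]
  field_simp
  ring

lemma integrable_gamma_section {μ y : ℝ} (hμ : 0 < μ) (hy : 0 < y) :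
    IntegrableOn (fun t : ℝ => t ^ μ * Real.exp (-(y * t))) (Ioi 0) := by
  have := integrableOn_rpow_mul_exp_neg_mul_rpow (p := 1) (s := μ) (b := y)
    (by linarith) one_pos hy
  refine this.congr_fun (fun t ht => ?_) measurableSet_Ioi
  simp only [Real.rpow_one, neg_mul]

lemma gamma_section {μ y : ℝ} (hμ : 0 < μ) (hy : 0 < y) :
    ∫ t in Ioi (0:ℝ), t ^ μ * Real.exp (-(y * t))
      = (1 / y) ^ (1 + μ) * Real.Gamma (1 + μ) := by
  have := integral_rpow_mul_exp_neg_mul_Ioi (a := 1 + μ) (by linarith) hy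
  rw [← this]
  apply setIntegral_congr_fun measurableSet_Ioi
  intro t _
  norm_num

lemma integrable_K {μ : ℝ} (hμ0 : 0 < μ) (hμ2 : μ < 2) :
    IntegrableOn (fun t : ℝ => t ^ (μ - 1) / (1 + t ^ 2)) (Ioi 0) := by
  have hmeas : AEStronglyMeasurable (fun t : ℝ => t ^ (μ - 1) / (1 + t ^ 2))
      (volume.restrict (Ioi 0)) := by
    apply Measurable.aestronglyMeasurable; fun_prop
  have h1 : IntegrableOn (fun t : ℝ => t ^ (μ - 1) / (1 + t ^ 2)) (Ioc 0 1) := by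
    have hig : IntegrableOn (fun t : ℝ => t ^ (μ - 1)) (Ioc 0 1) := by
      have h := intervalIntegral.intervalIntegrable_rpow' (a := 0) (b := 1)
        (by linarith : (-1:ℝ) < μ - 1)
      exact (intervalIntegrable_iff_integrableOn_Ioc_of_le zero_le_one).mp h
    refine Integrable.mono' hig (hmeas.mono_set Ioc_subset_Ioi_self) ?_
    filter_upwards [ae_restrict_mem measurableSet_Ioc] with t ht
    have ht0 : (0:ℝ) < t := ht.1
    have h12 : (1:ℝ) ≤ 1 + t ^ 2 := by nlinarith
    rw [Real.norm_of_nonneg (by positivity)]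
    exact div_le_self (Real.rpow_nonneg ht0.le _) h12
  have h2 : IntegrableOn (fun t : ℝ => t ^ (μ - 1) / (1 + t ^ 2)) (Ioi 1) := by
    have hig : IntegrableOn (fun t : ℝ => t ^ (μ - 3)) (Ioi 1) :=
      integrableOn_Ioi_rpow_of_lt (by linarith) one_pos
    refine Integrable.mono' hig (hmeas.mono_set (Ioi_subset_Ioi zero_le_one)) ?_
    filter_upwards [ae_restrict_mem measurableSet_Ioi] with t ht
    have ht0 : (0:ℝ) < t := lt_trans one_pos ht
    have ht2 : (0:ℝ) < t ^ 2 := by positivity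
    rw [Real.norm_of_nonneg (by positivity)]
    calc t ^ (μ - 1) / (1 + t ^ 2) ≤ t ^ (μ - 1) / t ^ 2 :=
          div_le_div_of_nonneg_left (Real.rpow_nonneg ht0.le _) ht2 (by linarith)
      _ = t ^ (μ - 3) := by
          rw [← Real.rpow_two, ← Real.rpow_sub ht0]
          congr 1; ring
  have : Ioi (0:ℝ) = Ioc 0 1 ∪ Ioi 1 := (Ioc_union_Ioi_eq_Ioi zero_le_one).symm
  rw [this]
  exact h1.union h2

lemma fubini2 {μ : ℝ} (hμ0 : 0 < μ) (hμ2 : μ < 2) :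
    ∫ t in Ioi (0:ℝ), t ^ (μ - 1) / (1 + t ^ 2)
      = 1 / 2 * Real.Gamma (μ / 2) * Real.Gamma (1 - μ / 2) := by
  set g : ℝ → ℝ → ℝ := fun t s => t ^ (μ - 1) * Real.exp (-((1 + t ^ 2) * s)) with hg
  have hmeas : AEStronglyMeasurable (Function.uncurry g)
      ((volume.restrict (Ioi 0)).prod (volume.restrict (Ioi (0:ℝ)))) := by
    apply Measurable.aestronglyMeasurable
    fun_prop
  have h12 : ∀ t : ℝ, (0:ℝ) < 1 + t ^ 2 := fun t => by positivity
  have hsect : ∀ᵐ t ∂(volume.restrict (Ioi (0:ℝ))),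
      Integrable (fun s => g t s) (volume.restrict (Ioi (0:ℝ))) := by
    filter_upwards with t
    exact (integrable_exp_neg_mul (h12 t)).const_mul _
  have hnorm : ∀ t ∈ Ioi (0:ℝ),
      (∫ s in Ioi (0:ℝ), ‖g t s‖) = t ^ (μ - 1) / (1 + t ^ 2) := by
    intro t ht
    have h1 : ∀ s ∈ Ioi (0:ℝ), ‖g t s‖ = g t s := by
      intro s _
      exact Real.norm_of_nonneg
        (mul_nonneg (Real.rpow_nonneg (le_of_lt ht) _) (Real.exp_nonneg _))
    rw [setIntegral_congr_fun measurableSet_Ioi h1]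
    simp only [hg]
    rw [integral_const_mul, laplace_one (h12 t), mul_one_div]
  have hint : Integrable (Function.uncurry g)
      ((volume.restrict (Ioi 0)).prod (volume.restrict (Ioi (0:ℝ)))) := by
    rw [integrable_prod_iff hmeas]
    refine ⟨hsect, ?_⟩
    refine (integrable_K hμ0 hμ2).congr ?_
    filter_upwards [ae_restrict_mem measurableSet_Ioi] with t ht
    exact (hnorm t ht).symm
  have hswap := integral_integral_swap hint
  have hL : ∫ t in Ioi (0:ℝ), ∫ s in Ioi (0:ℝ), g t s
      = ∫ t in Ioi (0:ℝ), t ^ (μ - 1) / (1 + t ^ 2) := by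
    apply setIntegral_congr_fun measurableSet_Ioi
    intro t ht
    simp only [hg]
    rw [integral_const_mul, laplace_one (h12 t), mul_one_div]
  have hR : ∫ s in Ioi (0:ℝ), ∫ t in Ioi (0:ℝ), g t s
      = 1 / 2 * Real.Gamma (μ / 2) * Real.Gamma (1 - μ / 2) := by
    have hinner : ∀ s ∈ Ioi (0:ℝ), (∫ t in Ioi (0:ℝ), g t s)
        = 1 / 2 * Real.Gamma (μ / 2) * (s ^ (-(μ / 2)) * Real.exp (-s)) := by
      intro s hs
      have hs' : (0:ℝ) < s := hs
      have heq : ∀ t ∈ Ioi (0:ℝ), g t s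
          = Real.exp (-s) * (t ^ (μ - 1) * Real.exp (-s * t ^ (2:ℝ))) := by
        intro t ht
        simp only [hg]
        rw [Real.rpow_two, show -((1 + t ^ 2) * s) = -s + -s * t ^ 2 from by ring,
          Real.exp_add]
        ring
      rw [setIntegral_congr_fun measurableSet_Ioi heq, integral_const_mul,
        integral_rpow_mul_exp_neg_mul_rpow (by norm_num) (by linarith) hs']
      have : (-(μ - 1 + 1) / 2) = -(μ / 2) := by ring
      rw [this]
      have : (μ - 1 + 1) / 2 = μ / 2 := by ring
      rw [this]
      ring
    rw [setIntegral_congr_fun measurableSet_Ioi hinner, integral_const_mul]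
    have : ∫ s in Ioi (0:ℝ), s ^ (-(μ / 2)) * Real.exp (-s) = Real.Gamma (1 - μ / 2) := by
      have := integral_rpow_mul_exp_neg_mul_Ioi (a := 1 - μ / 2) (by linarith) one_pos
      simp only [one_mul, Real.one_rpow, one_div_one] at this
      rw [← this]
      apply setIntegral_congr_fun measurableSet_Ioi
      intro s _
      norm_num
    rw [this]
  rw [← hL, ← hR] at *
  exact hswap

lemma fubini1 {μ : ℝ} (hμ0 : 0 < μ) (hμ2 : μ < 2) :
    Real.Gamma (1 + μ) * ∫ y in Ioi (0:ℝ), (1 - Real.cos y) / y ^ (1 + μ)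
      = ∫ t in Ioi (0:ℝ), t ^ (μ - 1) / (1 + t ^ 2) := by
  set f : ℝ → ℝ → ℝ := fun y t => (1 - Real.cos y) * (t ^ μ * Real.exp (-(y * t))) with hf
  have hmeas : AEStronglyMeasurable (Function.uncurry f)
      ((volume.restrict (Ioi 0)).prod (volume.restrict (Ioi (0:ℝ)))) := by
    apply Measurable.aestronglyMeasurable
    fun_prop
  have hsect : ∀ᵐ y ∂(volume.restrict (Ioi (0:ℝ))),
      Integrable (fun t => f y t) (volume.restrict (Ioi (0:ℝ))) := by
    filter_upwards [ae_restrict_mem measurableSet_Ioi] with y hy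
    exact (integrable_gamma_section hμ0 hy).const_mul _
  have hnorm : ∀ y ∈ Ioi (0:ℝ),
      (∫ t in Ioi (0:ℝ), ‖f y t‖) = Real.Gamma (1 + μ) * ((1 - Real.cos y) / y ^ (1 + μ)) := by
    intro y hy
    have h1 : ∀ t ∈ Ioi (0:ℝ), ‖f y t‖ = f y t := by
      intro t ht
      have hc := Real.cos_le_one y
      have : 0 ≤ f y t :=
        mul_nonneg (by linarith)
          (mul_nonneg (Real.rpow_nonneg (le_of_lt ht) μ) (Real.exp_nonneg _))
      exact Real.norm_of_nonneg this
    rw [setIntegral_congr_fun measurableSet_Ioi h1]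
    rw [hf]
    simp only
    rw [integral_const_mul, gamma_section hμ0 hy, one_div, Real.inv_rpow hy.out.le]
    ring
  have hint : Integrable (Function.uncurry f)
      ((volume.restrict (Ioi 0)).prod (volume.restrict (Ioi (0:ℝ)))) := by
    rw [integrable_prod_iff hmeas]
    refine ⟨hsect, ?_⟩
    have : IntegrableOn (fun y => Real.Gamma (1 + μ) * ((1 - Real.cos y) / y ^ (1 + μ)))
        (Ioi (0:ℝ)) := by
      have h0 : IntegrableOn
          (fun y : ℝ => Real.Gamma (1 + μ) * ((1 - Real.cos (1 * y)) / y ^ (1 + μ)))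
          (Ioi (0:ℝ)) := (integrable_kernel hμ0 hμ2 1).const_mul (Real.Gamma (1 + μ))
      refine h0.congr_fun (fun y _ => by simp only [one_mul]) measurableSet_Ioi
    refine this.congr ?_
    filter_upwards [ae_restrict_mem measurableSet_Ioi] with y hy
    exact (hnorm y hy).symm
  have hswap := integral_integral_swap hint
  have hL : ∫ y in Ioi (0:ℝ), ∫ t in Ioi (0:ℝ), f y t
      = Real.Gamma (1 + μ) * ∫ y in Ioi (0:ℝ), (1 - Real.cos y) / y ^ (1 + μ) := by
    rw [← integral_const_mul]
    apply setIntegral_congr_fun measurableSet_Ioi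
    intro y hy
    simp only [hf]
    rw [integral_const_mul, gamma_section hμ0 hy, one_div, Real.inv_rpow (le_of_lt hy)]
    ring
  have hR : ∫ t in Ioi (0:ℝ), ∫ y in Ioi (0:ℝ), f y t
      = ∫ t in Ioi (0:ℝ), t ^ (μ - 1) / (1 + t ^ 2) := by
    apply setIntegral_congr_fun measurableSet_Ioi
    intro t ht
    have ht' : (0:ℝ) < t := ht
    have : ∀ y : ℝ, f y t = t ^ μ * ((1 - Real.cos y) * Real.exp (-(t * y))) := by
      intro y; simp only [hf]; rw [mul_comm y t]; ring
    simp only [this]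
    rw [integral_const_mul, laplace_one_sub_cos ht', Real.rpow_sub ht', Real.rpow_one]
    field_simp
  rw [← hL, ← hR] at *
  exact hswap

lemma cos_half_ne_zero {μ : ℝ} (hμ0 : 0 < μ) (hμ2 : μ < 2) (hμ1 : μ ≠ 1) :
    Real.cos (π * μ / 2) ≠ 0 := by
  intro h
  rw [Real.cos_eq_zero_iff] at h
  obtain ⟨n, hn⟩ := h
  have hπ : (0:ℝ) < π := Real.pi_pos
  have hμn : μ = 2 * n + 1 := by
    have hc : π * μ = π * (2 * n + 1) := by linear_combination 2 * hn
    exact mul_left_cancel₀ hπ.ne' hc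
  have h0 : (0:ℝ) < 2 * (n:ℝ) + 1 := hμn ▸ hμ0
  have h2 : (2:ℝ) * (n:ℝ) + 1 < 2 := hμn ▸ hμ2
  have hn0 : n = 0 := by
    have ha : (-1:ℤ) < 2 * n := by exact_mod_cast (by push_cast; linarith : (-1:ℝ) < 2 * n)
    have hb : (2:ℤ) * n < 1 := by exact_mod_cast (by push_cast; linarith : (2:ℝ) * n < 1)
    omega
  exact hμ1 (by rw [hμn, hn0]; norm_num)

lemma sin_half_pos {μ : ℝ} (hμ0 : 0 < μ) (hμ2 : μ < 2) : 0 < Real.sin (π * μ / 2) := by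
  have hπ := Real.pi_pos
  apply Real.sin_pos_of_pos_of_lt_pi
  · positivity
  · nlinarith

lemma J_val {μ : ℝ} (hμ0 : 0 < μ) (hμ2 : μ < 2) (hμ1 : μ ≠ 1) :
    ∫ y in Ioi (0:ℝ), (1 - Real.cos y) / y ^ (1 + μ)
      = Real.Gamma (1 - μ) * Real.cos (π * μ / 2) / μ := by
  have hπ := Real.pi_pos
  have hΓμ : 0 < Real.Gamma μ := Real.Gamma_pos_of_pos hμ0
  have hs : (0:ℝ) < Real.sin (π * μ / 2) := sin_half_pos hμ0 hμ2
  have hco : Real.cos (π * μ / 2) ≠ 0 := cos_half_ne_zero hμ0 hμ2 hμ1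
  have hsin2 : Real.sin (π * μ) = 2 * Real.sin (π * μ / 2) * Real.cos (π * μ / 2) := by
    have := Real.sin_two_mul (π * μ / 2)
    rw [show 2 * (π * μ / 2) = π * μ from by ring] at this
    exact this
  have hsπ : Real.sin (π * μ) ≠ 0 := by
    rw [hsin2]; exact mul_ne_zero (by positivity) hco
  have h1 : Real.Gamma (μ/2) * Real.Gamma (1 - μ/2) * Real.sin (π * μ / 2) = π := by
    have := Real.Gamma_mul_Gamma_one_sub (μ/2)
    rw [show π * (μ/2) = π * μ / 2 from by ring] at this
    rw [this, div_mul_cancel₀ _ hs.ne']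
  have h2 : Real.Gamma μ * Real.Gamma (1 - μ)
      * (2 * Real.sin (π * μ / 2) * Real.cos (π * μ / 2)) = π := by
    rw [← hsin2, Real.Gamma_mul_Gamma_one_sub μ, div_mul_cancel₀ _ hsπ]
  have hJ : μ * Real.Gamma μ * ∫ y in Ioi (0:ℝ), (1 - Real.cos y) / y ^ (1 + μ)
      = 1 / 2 * Real.Gamma (μ / 2) * Real.Gamma (1 - μ / 2) := by
    have h := (fubini1 hμ0 hμ2).trans (fubini2 hμ0 hμ2)
    rwa [show Real.Gamma (1 + μ) = μ * Real.Gamma μ from by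
      rw [add_comm]; exact Real.Gamma_add_one hμ0.ne'] at h
  rw [eq_div_iff hμ0.ne']
  set J := ∫ y in Ioi (0:ℝ), (1 - Real.cos y) / y ^ (1 + μ) with hJdef
  have key : J * μ * (2 * Real.sin (π * μ / 2) * Real.Gamma μ) = π := by
    linear_combination 2 * Real.sin (π * μ / 2) * hJ + h1
  have key2 : Real.Gamma (1 - μ) * Real.cos (π * μ / 2)
      * (2 * Real.sin (π * μ / 2) * Real.Gamma μ) = π := by
    linear_combination h2
  exact mul_right_cancel₀ (by positivity) (key.trans key2.symm)

lemma J_scale {μ : ℝ} (hμ0 : 0 < μ) (hμ2 : μ < 2) {c : ℝ} (hc : 0 < c) :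
    ∫ y in Ioi (0:ℝ), (1 - Real.cos (c * y)) / y ^ (1 + μ)
      = c ^ μ * ∫ y in Ioi (0:ℝ), (1 - Real.cos y) / y ^ (1 + μ) := by
  have hstep : ∀ y ∈ Ioi (0:ℝ), (1 - Real.cos (c * y)) / y ^ (1 + μ)
      = c ^ (1 + μ) * ((1 - Real.cos (c * y)) / (c * y) ^ (1 + μ)) := by
    intro y hy
    have hy0 : (0:ℝ) < y := hy
    rw [Real.mul_rpow hc.le hy0.le]
    have h1 : c ^ (1 + μ) ≠ 0 := (Real.rpow_pos_of_pos hc _).ne'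
    field_simp
  rw [setIntegral_congr_fun measurableSet_Ioi hstep, integral_const_mul,
    integral_comp_mul_left_Ioi (fun u => (1 - Real.cos u) / u ^ (1 + μ)) 0 hc,
    mul_zero]
  simp only [smul_eq_mul]
  rw [← mul_assoc]
  congr 1
  rw [← Real.rpow_neg_one c, ← Real.rpow_add hc]
  congr 1
  ring

lemma J_c {μ : ℝ} (hμ0 : 0 < μ) (hμ2 : μ < 2) (hμ1 : μ ≠ 1) (c : ℝ) :
    ∫ y in Ioi (0:ℝ), (1 - Real.cos (c * y)) / y ^ (1 + μ)
      = |c| ^ μ * (Real.Gamma (1 - μ) * Real.cos (π * μ / 2) / μ) := by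
  rcases eq_or_ne c 0 with rfl | hc
  · simp [Real.zero_rpow hμ0.ne']
  · have habs : ∀ y ∈ Ioi (0:ℝ), (1 - Real.cos (c * y)) / y ^ (1 + μ)
        = (1 - Real.cos (|c| * y)) / y ^ (1 + μ) := by
      intro y hy
      have : |c| * y = |c * y| := by
        rw [abs_mul, abs_of_pos (show (0:ℝ) < y from hy)]
      rw [this, Real.cos_abs]
    rw [setIntegral_congr_fun measurableSet_Ioi habs,
      J_scale hμ0 hμ2 (abs_pos.mpr hc), J_val hμ0 hμ2 hμ1]



end GLRieszAux

/-- The symmetric (Grünwald–Letnikov–Riesz) fractional derivative of order `μ ∈ (0,2)`, `μ ≠ 1`,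
maps the periodic function `x ↦ e^{ilx}` to `|l|^μ e^{ilx}`:
`(μ/(2Γ(1-μ)cos(πμ/2))) ∫₀^∞ (2e^{ilx} - e^{il(x+y)} - e^{il(x-y)})/y^{1+μ} dy = |l|^μ e^{ilx}`. -/
theorem gl_riesz_deriv_exp (μ l x : ℝ) (hμ0 : 0 < μ) (hμ2 : μ < 2) (hμ1 : μ ≠ 1) :
    IntegrableOn
      (fun y : ℝ =>
        (2 * Complex.exp (Complex.I * (l : ℂ) * (x : ℂ)) -
            Complex.exp (Complex.I * (l : ℂ) * ((x + y : ℝ) : ℂ)) -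
            Complex.exp (Complex.I * (l : ℂ) * ((x - y : ℝ) : ℂ))) / ((y ^ (1 + μ) : ℝ) : ℂ))
      (Set.Ioi 0) ∧
    ((μ / (2 * Real.Gamma (1 - μ) * Real.cos (Real.pi * μ / 2)) : ℝ) : ℂ) *
        ∫ y in Set.Ioi (0 : ℝ),
          (2 * Complex.exp (Complex.I * (l : ℂ) * (x : ℂ)) -
              Complex.exp (Complex.I * (l : ℂ) * ((x + y : ℝ) : ℂ)) -
              Complex.exp (Complex.I * (l : ℂ) * ((x - y : ℝ) : ℂ))) / ((y ^ (1 + μ) : ℝ) : ℂ) =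
      ((|l| ^ μ : ℝ) : ℂ) * Complex.exp (Complex.I * (l : ℂ) * (x : ℂ)) := by
  set E : ℂ := Complex.exp (Complex.I * (l : ℂ) * (x : ℂ)) with hE
  -- pointwise identity
  have hpt : ∀ y : ℝ,
      (2 * E - Complex.exp (Complex.I * (l : ℂ) * ((x + y : ℝ) : ℂ)) -
        Complex.exp (Complex.I * (l : ℂ) * ((x - y : ℝ) : ℂ))) / ((y ^ (1 + μ) : ℝ) : ℂ)
      = E * (((2 - 2 * Real.cos (l * y)) / y ^ (1 + μ) : ℝ) : ℂ) := by
    intro y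
    have e1 : Complex.exp (Complex.I * (l : ℂ) * ((x + y : ℝ) : ℂ))
        = E * Complex.exp (Complex.I * (l : ℂ) * (y : ℂ)) := by
      rw [hE, ← Complex.exp_add]; push_cast; ring_nf
    have e2 : Complex.exp (Complex.I * (l : ℂ) * ((x - y : ℝ) : ℂ))
        = E * Complex.exp (-(Complex.I * (l : ℂ) * (y : ℂ))) := by
      rw [hE, ← Complex.exp_add]; push_cast; ring_nf
    have hcos : ((2 - 2 * Real.cos (l * y) : ℝ) : ℂ)
        = 2 - (Complex.exp (Complex.I * (l : ℂ) * (y : ℂ)) +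
            Complex.exp (-(Complex.I * (l : ℂ) * (y : ℂ)))) := by
      have h2c := Complex.two_cos (x := ((l : ℂ) * (y : ℂ)))
      push_cast
      ring_nf at h2c ⊢
      linear_combination -h2c
    rw [e1, e2, Complex.ofReal_div, hcos]
    ring
  -- real integrand integrability
  have hker : IntegrableOn (fun y : ℝ => (2 - 2 * Real.cos (l * y)) / y ^ (1 + μ)) (Ioi 0) := by
    have h0 : IntegrableOn (fun y : ℝ => 2 * ((1 - Real.cos (l * y)) / y ^ (1 + μ))) (Ioi 0) :=
      (integrable_kernel hμ0 hμ2 l).const_mul 2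
    refine h0.congr_fun (fun y _ => ?_) measurableSet_Ioi
    field_simp
  have hint : IntegrableOn
      (fun y : ℝ =>
        (2 * E - Complex.exp (Complex.I * (l : ℂ) * ((x + y : ℝ) : ℂ)) -
          Complex.exp (Complex.I * (l : ℂ) * ((x - y : ℝ) : ℂ))) / ((y ^ (1 + μ) : ℝ) : ℂ))
      (Ioi 0) := by
    have h1 : IntegrableOn (fun y : ℝ =>
        E * (((2 - 2 * Real.cos (l * y)) / y ^ (1 + μ) : ℝ) : ℂ)) (Ioi 0) :=
      (hker.ofReal).const_mul E
    exact h1.congr_fun (fun y _ => (hpt y).symm) measurableSet_Ioi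
  refine ⟨hint, ?_⟩
  -- compute the integral
  have hval : ∫ y in Ioi (0:ℝ), (2 - 2 * Real.cos (l * y)) / y ^ (1 + μ)
      = 2 * (|l| ^ μ * (Real.Gamma (1 - μ) * Real.cos (π * μ / 2) / μ)) := by
    rw [← J_c hμ0 hμ2 hμ1 l, ← integral_const_mul]
    apply setIntegral_congr_fun measurableSet_Ioi
    intro y _
    field_simp
  have hIR : (∫ a in Ioi (0:ℝ), (((2 - 2 * Real.cos (l * a)) / a ^ (1 + μ) : ℝ) : ℂ))
      = (((∫ a in Ioi (0:ℝ), (2 - 2 * Real.cos (l * a)) / a ^ (1 + μ)) : ℝ) : ℂ) :=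
    integral_ofReal
  rw [setIntegral_congr_fun measurableSet_Ioi (fun y _ => hpt y), integral_const_mul,
    hIR, hval]
  have hG : Real.Gamma (1 - μ) ≠ 0 := by
    apply Real.Gamma_ne_zero
    intro m
    rcases m with _ | m
    · simpa using sub_ne_zero.mpr (fun h => hμ1 h.symm)
    · push_cast
      intro h
      have : (m:ℝ) ≥ 0 := Nat.cast_nonneg m
      nlinarith
  have hco : Real.cos (π * μ / 2) ≠ 0 := cos_half_ne_zero hμ0 hμ2 hμ1
  rw [show ((μ / (2 * Real.Gamma (1 - μ) * Real.cos (π * μ / 2)) : ℝ) : ℂ) *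
      (E * ((2 * (|l| ^ μ * (Real.Gamma (1 - μ) * Real.cos (π * μ / 2) / μ)) : ℝ) : ℂ))
      = (((μ / (2 * Real.Gamma (1 - μ) * Real.cos (π * μ / 2))) *
          (2 * (|l| ^ μ * (Real.Gamma (1 - μ) * Real.cos (π * μ / 2) / μ))) : ℝ) : ℂ) * E
      from by push_cast; ring]
  congr 1
  rw [show (μ / (2 * Real.Gamma (1 - μ) * Real.cos (π * μ / 2))) *
      (2 * (|l| ^ μ * (Real.Gamma (1 - μ) * Real.cos (π * μ / 2) / μ))) = |l| ^ μ
      from by field_simp; exact mul_div_cancel_left₀ _ (by rwa [mul_comm μ π])]
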